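/- arXiv:nlin/0405040 — 5 statements merged into one kernel-verified Lean document; each statement's English description precedes it below -/
import Mathlib

section
/- Let B be a symmetric, ad-invariant, non-degenerate bilinear form on g and let a_0,…,a_n be complex numbers with a_n ≠ 0. Then the bilinear form ⟨X,Y⟩^(n)_A = Σ_{j=0}^n a_j Σ_{i=0}^j B(X_i, Y_{j−i}) on g^(n) is symmetric, ad-invariant (⟨[X,Y],Z⟩^(n)_A = ⟨X,[Y,Z]⟩^(n)_A for all X,Y,Z ∈ g^(n)), and non-degenerate. -/
open scoped BigOperators
open Fin.NatCast

/-- The Lie bracket of the polynomial Lie algebra `g^{(n)}` on `(n+1)`-tuples: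
`[(X_0,…,X_n),(Y_0,…,Y_n)]_k = ∑_{j=0}^k ⁅X_j, Y_{k-j}⁆`. -/
noncomputable def tupleBracket {g : Type*} [LieRing g] (n : ℕ) (X Y : Fin (n + 1) → g) :
    Fin (n + 1) → g :=
  fun k => ∑ j ∈ Finset.range ((k : ℕ) + 1),
    ⁅X (j : Fin (n + 1)), Y (((k : ℕ) - j : ℕ) : Fin (n + 1))⁆

/-- The bilinear form `⟨X,Y⟩^{(n)}_A = ∑_{j=0}^n a_j ∑_{i=0}^j B(X_i, Y_{j-i})` on `g^{(n)}`. -/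
noncomputable def tupleForm {g : Type*} [AddCommGroup g] [Module ℂ g]
    (n : ℕ) (B : g →ₗ[ℂ] g →ₗ[ℂ] ℂ) (a : ℕ → ℂ) (X Y : Fin (n + 1) → g) : ℂ :=
  ∑ j ∈ Finset.range (n + 1), a j * ∑ i ∈ Finset.range (j + 1),
    B (X (i : Fin (n + 1))) (Y ((j - i : ℕ) : Fin (n + 1)))

/-! Written as `∑_j a_j ∑_{p+q=j} B(X_p, Y_q)`, the form is symmetric by the swap `(p,q) ↦ (q,p)`
of the antidiagonal, and ad-invariant because the truncated convolution is associative: both sides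
become sums of `a_j B(X_p, ⁅Y_q, Z_r⁆)` over `p+q+r = j`. For non-degeneracy, if
`X_0 = ⋯ = X_{k-1} = 0` then pairing `X` with `y` placed in slot `n-k` leaves only `a_n B(X_k, y)`,
so `X_k = 0` by induction on `k`. -/

section

open Finset

theorem Finset.Nat.sum_antidiagonal_sum_antidiagonal_fst {M : Type*} [AddCommMonoid M] (n : ℕ)
    (f : ℕ → ℕ → ℕ → M) :
    ∑ p ∈ antidiagonal n, ∑ q ∈ antidiagonal p.1, f q.1 q.2 p.2 =
      ∑ p ∈ antidiagonal n, ∑ q ∈ antidiagonal p.2, f p.1 q.1 q.2 := by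
  rw [sum_sigma', sum_sigma']
  refine sum_nbij' (fun x => ⟨(x.2.1, x.2.2 + x.1.2), (x.2.2, x.1.2)⟩)
    (fun x => ⟨(x.1.1 + x.2.1, x.2.2), (x.1.1, x.2.1)⟩) ?_ ?_ ?_ ?_ ?_ <;>
  rintro ⟨⟨i, j⟩, ⟨k, l⟩⟩ h <;> simp_all [mem_sigma, HasAntidiagonal.mem_antidiagonal] <;> omega

variable {g : Type*} {n : ℕ}

section Form

variable [AddCommGroup g] [Module ℂ g] (B : g →ₗ[ℂ] g →ₗ[ℂ] ℂ) (a : ℕ → ℂ)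

theorem tupleForm_eq_sum_antidiagonal (X Y : Fin (n + 1) → g) :
    tupleForm n B a X Y =
      ∑ j ∈ range (n + 1), a j * ∑ p ∈ antidiagonal j, B (X p.1) (Y p.2) := by
  simp only [tupleForm, Nat.sum_antidiagonal_eq_sum_range_succ (fun i l => B (X i) (Y l))]

theorem tupleForm_comm (hB : ∀ x y : g, B x y = B y x) (X Y : Fin (n + 1) → g) :
    tupleForm n B a X Y = tupleForm n B a Y X := by
  simp only [tupleForm_eq_sum_antidiagonal]
  refine sum_congr rfl fun j _ => congrArg (a j * ·) ?_
  rw [← Nat.sum_antidiagonal_swap]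
  simp only [Prod.fst_swap, Prod.snd_swap, hB]

theorem tupleForm_single_of_forall_lt_eq_zero {X : Fin (n + 1) → g} {k : ℕ} (hk : k ≤ n)
    (hX : ∀ i < k, X i = 0) (y : g) :
    tupleForm n B a X (Pi.single ((n - k : ℕ) : Fin (n + 1)) y) = a n * B (X k) y := by
  have hterm : ∀ i l, i + l ≤ n →
      B (X i) ((Pi.single ((n - k : ℕ) : Fin (n + 1)) y : Fin (n + 1) → g) l) =
        if (i, l) = (k, n - k) then B (X k) y else 0 := by
    intro i l hil
    have hcast : (l : Fin (n + 1)) = ((n - k : ℕ) : Fin (n + 1)) ↔ l = n - k := by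
      rw [Fin.ext_iff, Fin.val_cast_of_lt (by omega), Fin.val_cast_of_lt (by omega)]
    simp only [Pi.single_apply, hcast, Prod.mk.injEq]
    by_cases hi : i < k
    · rw [hX i hi, map_zero, LinearMap.zero_apply, if_neg (by omega)]
    · by_cases hl : l = n - k
      · obtain rfl : i = k := by omega
        simp [hl]
      · simp [hl]
  rw [tupleForm_eq_sum_antidiagonal]
  calc ∑ j ∈ range (n + 1), a j * ∑ p ∈ antidiagonal j,
        B (X p.1) ((Pi.single ((n - k : ℕ) : Fin (n + 1)) y : Fin (n + 1) → g) p.2)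
      = ∑ j ∈ range (n + 1), a j * if j = n then B (X k) y else 0 :=
        sum_congr rfl fun j hj => by
          rw [sum_congr rfl fun p hp => hterm p.1 p.2 (by
            have := HasAntidiagonal.mem_antidiagonal.mp hp
            have := mem_range.mp hj
            omega)]
          simp [Nat.add_sub_cancel' hk, eq_comm]
    _ = a n * B (X k) y := by simp

theorem eq_zero_of_forall_tupleForm_eq_zero (hB : ∀ x : g, (∀ y : g, B x y = 0) → x = 0)
    (ha : a n ≠ 0) (X : Fin (n + 1) → g) (hX : ∀ Y, tupleForm n B a X Y = 0) : X = 0 := by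
  have hvanish : ∀ k ≤ n, X k = 0 := by
    intro k
    induction k using Nat.strong_induction_on with
    | _ k ih =>
      intro hk
      refine hB _ fun y => ?_
      have h := hX (Pi.single ((n - k : ℕ) : Fin (n + 1)) y)
      rw [tupleForm_single_of_forall_lt_eq_zero B a hk fun i hi => ih i hi (by omega)] at h
      exact (mul_eq_zero.mp h).resolve_left ha
  funext i
  simpa using hvanish i i.is_le

end Form

section Bracket

variable [LieRing g]

theorem tupleBracket_natCast {k : ℕ} (hk : k ≤ n) (X Y : Fin (n + 1) → g) :
    tupleBracket n X Y k = ∑ p ∈ antidiagonal k, ⁅X p.1, Y p.2⁆ := by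
  rw [tupleBracket, Fin.val_cast_of_lt (Nat.lt_succ_of_le hk),
    Nat.sum_antidiagonal_eq_sum_range_succ (fun i l => ⁅X i, Y l⁆)]

theorem tupleForm_tupleBracket_left [Module ℂ g] (B : g →ₗ[ℂ] g →ₗ[ℂ] ℂ) (a : ℕ → ℂ)
    (hB : ∀ x y z : g, B ⁅x, y⁆ z = B x ⁅y, z⁆) (X Y Z : Fin (n + 1) → g) :
    tupleForm n B a (tupleBracket n X Y) Z = tupleForm n B a X (tupleBracket n Y Z) := by
  simp only [tupleForm_eq_sum_antidiagonal]
  refine sum_congr rfl fun j hj => congrArg (a j * ·) ?_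
  have hjn : j ≤ n := Nat.lt_succ_iff.mp (mem_range.mp hj)
  calc ∑ p ∈ antidiagonal j, B (tupleBracket n X Y p.1) (Z p.2)
      = ∑ p ∈ antidiagonal j, ∑ q ∈ antidiagonal p.1, B (X q.1) ⁅Y q.2, Z p.2⁆ :=
        sum_congr rfl fun p hp => by
          rw [tupleBracket_natCast ((HasAntidiagonal.antidiagonal.fst_le hp).trans hjn),
            map_sum, LinearMap.sum_apply]
          simp only [hB]
    _ = ∑ p ∈ antidiagonal j, ∑ q ∈ antidiagonal p.2, B (X p.1) ⁅Y q.1, Z q.2⁆ :=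
        Nat.sum_antidiagonal_sum_antidiagonal_fst j fun i k l => B (X i) ⁅Y k, Z l⁆
    _ = ∑ p ∈ antidiagonal j, B (X p.1) (tupleBracket n Y Z p.2) :=
        sum_congr rfl fun p hp => by
          rw [tupleBracket_natCast ((HasAntidiagonal.antidiagonal.snd_le hp).trans hjn),
            map_sum]

end Bracket

end

theorem stmt3_general {g : Type*} [LieRing g] [LieAlgebra ℂ g]
    (n : ℕ) (B : g →ₗ[ℂ] g →ₗ[ℂ] ℂ)
    (hBsymm : ∀ x y : g, B x y = B y x)
    (hBinv : ∀ x y z : g, B ⁅x, y⁆ z = B x ⁅y, z⁆)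
    (hBnd : ∀ x : g, (∀ y : g, B x y = 0) → x = 0)
    (a : ℕ → ℂ) (han : a n ≠ 0) :
    (∀ X Y : Fin (n + 1) → g, tupleForm n B a X Y = tupleForm n B a Y X) ∧
    (∀ X Y Z : Fin (n + 1) → g,
        tupleForm n B a (tupleBracket n X Y) Z = tupleForm n B a X (tupleBracket n Y Z)) ∧
    (∀ X : Fin (n + 1) → g, (∀ Y : Fin (n + 1) → g, tupleForm n B a X Y = 0) → X = 0) :=
  ⟨tupleForm_comm B a hBsymm, tupleForm_tupleBracket_left B a hBinv,
    eq_zero_of_forall_tupleForm_eq_zero B a hBnd han⟩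

/-- If `B` is symmetric, ad-invariant and non-degenerate on `g` and `a_n ≠ 0`, then
`⟨·,·⟩^{(n)}_A` is symmetric, ad-invariant and non-degenerate on `g^{(n)}`. -/
theorem stmt3 {g : Type*} [LieRing g] [LieAlgebra ℂ g] [FiniteDimensional ℂ g]
    (n : ℕ) (B : g →ₗ[ℂ] g →ₗ[ℂ] ℂ)
    (hBsymm : ∀ x y : g, B x y = B y x)
    (hBinv : ∀ x y z : g, B ⁅x, y⁆ z = B x ⁅y, z⁆)
    (hBnd : ∀ x : g, (∀ y : g, B x y = 0) → x = 0)
    (a : ℕ → ℂ) (han : a n ≠ 0) :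
    (∀ X Y : Fin (n + 1) → g, tupleForm n B a X Y = tupleForm n B a Y X) ∧
    (∀ X Y Z : Fin (n + 1) → g,
        tupleForm n B a (tupleBracket n X Y) Z = tupleForm n B a X (tupleBracket n Y Z)) ∧
    (∀ X : Fin (n + 1) → g, (∀ Y : Fin (n + 1) → g, tupleForm n B a X Y = 0) → X = 0) :=
  stmt3_general n B hBsymm hBinv hBnd a han
end

section
/- For every ζ ≠ 0 the elements Y^(l)_i(ζ) (0 ≤ l ≤ n, 1 ≤ i ≤ r) form a basis of g^n = ⊕_{l=0}^n g_l, and as ζ → 0 the structure constants of the direct-sum Lie bracket with respect to this basis converge to the structure constants of the polynomial Lie algebra g^(n): for all i, j, l, m, the coordinates of [Y^(l)_i(ζ), Y^(m)_j(ζ)] in the basis Y(ζ) tend to c^k_{ij} in the coordinate of Y^{(l+m)}_k when l+m ≤ n, and to 0 in all other coordinates (in particular the whole bracket tends to 0 in coordinates when l+m > n). -/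
open scoped BigOperators Topology

/-- The contracted basis elements `Y^{(l)}_i(ζ) = ∑_{s=0}^{n-l} ζ^{l·2^s} X^{(s)}_i` of the
direct sum `g^n = ⊕_{s=0}^n g_s` of `n+1` copies of `g` (realized as `Fin (n+1) → g`):
the component of `Y^{(l)}_i(ζ)` in the `s`-th copy is `ζ^{l·2^s} • b i` for `s ≤ n - l`
and `0` otherwise. -/
noncomputable def Yzeta {g : Type*} [AddCommGroup g] [Module ℂ g] {r : ℕ} (n : ℕ)
    (b : Module.Basis (Fin r) ℂ g) (ζ : ℂ) (l : ℕ) (i : Fin r) : Fin (n + 1) → g :=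
  fun s => if (s : ℕ) ≤ n - l then ζ ^ (l * 2 ^ (s : ℕ)) • b i else 0

/-!
The component of `Y^(t)_k(ζ)` in copy `s` is `A(ζ) s t • X_k`, where
`A(ζ) s t = ζ ^ (t * 2 ^ s)` for `s + t ≤ n` and `0` otherwise; `A(ζ)` is anti-triangular with
nonzero antidiagonal for `ζ ≠ 0`, so `Y(ζ)` is a basis. In copy `s`,
`⁅Y^(l)_i, Y^(m)_j⁆ = [s + max l m ≤ n] ζ ^ ((l + m) * 2 ^ s) • ⁅X_i, X_j⁆`, so its coordinates
are `c^k_{ij} x t`, where `A(ζ) x = v` with `v s = [s + max l m ≤ n] ζ ^ ((l + m) * 2 ^ s)`.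
Solving this triangular system by forward substitution gives
`x t = δ_{t, l+m} + ζ ^ 2 ^ (n - t) * r t` with `r t` polynomial in `ζ`: the exponents never
become negative because `2 ^ k ≥ k + 1`. Letting `ζ → 0` gives the limits.
-/

open Finset Filter

/-- Forward substitution for the lower triangular system
`∑_{t ≤ a} ζ ^ E a t * x t = ζ ^ E a a * h a ζ`, dividing row `a` by `ζ ^ E a a`; the truncated
exponents `E a t - E a a` are the right ones when `E a a ≤ E a t` for `t < a`. -/
noncomputable def forwardSubst {R : Type*} [CommRing R] (E : ℕ → ℕ → ℕ) (h : ℕ → R → R) :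
    ℕ → R → R
  | a => fun ζ => h a ζ - ∑ t : Fin a, ζ ^ (E a t - E a a) * forwardSubst E h t ζ

theorem sum_pow_mul_forwardSubst {R : Type*} [CommRing R] (E : ℕ → ℕ → ℕ) (h : ℕ → R → R)
    {a : ℕ} (hE : ∀ t < a, E a a ≤ E a t) (ζ : R) :
    ∑ t ∈ range (a + 1), ζ ^ E a t * forwardSubst E h t ζ = ζ ^ E a a * h a ζ := by
  have hterm : ∀ t ∈ range a, ζ ^ E a a * (ζ ^ (E a t - E a a) * forwardSubst E h t ζ) =
      ζ ^ E a t * forwardSubst E h t ζ :=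
    fun t ht => by rw [← mul_assoc, pow_mul_pow_sub _ (hE t (mem_range.mp ht))]
  rw [sum_range_succ, forwardSubst, mul_sub, mul_sum,
    Fin.sum_univ_eq_sum_range (fun t => ζ ^ E a a * (ζ ^ (E a t - E a a) * forwardSubst E h t ζ)),
    sum_congr rfl hterm, add_sub_cancel]

theorem continuous_forwardSubst {R : Type*} [CommRing R] [TopologicalSpace R]
    [IsTopologicalRing R] (E : ℕ → ℕ → ℕ) {h : ℕ → R → R} (hh : ∀ a, Continuous (h a)) (a : ℕ) :
    Continuous (forwardSubst E h a) := by
  induction a using Nat.strong_induction_on with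
  | _ a ih =>
    rw [forwardSubst]
    exact (hh a).sub (continuous_finsetSum _ fun t _ => (continuous_pow _).mul (ih t t.2))

theorem linearIndependent_matrix_smul {ι κ R M : Type*} [Fintype ι] [DecidableEq ι] [Fintype κ]
    [CommRing R] [NoZeroDivisors R] [AddCommGroup M] [Module R M]
    {A : Matrix ι ι R} (hA : A.det ≠ 0) {v : κ → M} (hv : LinearIndependent R v) :
    LinearIndependent R fun p : ι × κ => fun s => A s p.1 • v p.2 := by
  rw [Fintype.linearIndependent_iff] at hv ⊢
  intro w hw
  have hcol : ∀ k, A.mulVec (fun t => w (t, k)) = 0 := fun k => funext fun s => by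
    refine hv (fun k => A.mulVec (fun t => w (t, k)) s) ?_ k
    have hs := congrFun hw s
    simp only [Finset.sum_apply, Pi.smul_apply, Pi.zero_apply, smul_smul,
      Fintype.sum_prod_type] at hs
    rw [Finset.sum_comm] at hs
    simpa only [Matrix.mulVec, dotProduct, Finset.sum_smul, mul_comm] using hs
  exact fun p => congrFun (Matrix.eq_zero_of_mulVec_eq_zero hA (hcol p.2)) p.1

/-- Substituting `x t = δ_{t p} + ζ ^ 2 ^ (n - t) * r t` into row `s = n - a` of
`contractionMatrix n ζ *ᵥ x = v` leaves `∑_{t ≤ a} ζ ^ bracketExp n a t * r t` on the left. -/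
def bracketExp (n a t : ℕ) : ℕ := t * 2 ^ (n - a) + 2 ^ (n - t)

theorem bracketExp_le {n a t : ℕ} (hta : t ≤ a) (han : a ≤ n) :
    bracketExp n a a ≤ bracketExp n a t := by
  have hpow : 2 ^ (n - t) = 2 ^ (a - t) * 2 ^ (n - a) := by rw [← pow_add]; congr 1; omega
  have hlin : a - t + 1 ≤ 2 ^ (a - t) := Nat.lt_two_pow_self
  calc bracketExp n a a = t * 2 ^ (n - a) + (a - t + 1) * 2 ^ (n - a) := by
        rw [bracketExp, ← add_mul, ← add_one_mul]; congr 1; omega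
    _ ≤ bracketExp n a t := by rw [bracketExp, hpow]; gcongr

noncomputable def bracketRhs (n p q a : ℕ) (ζ : ℂ) : ℂ :=
  if q ≤ a ∧ a < p then ζ ^ (p * 2 ^ (n - a) - bracketExp n a a) else 0

noncomputable def bracketCoeff (n p q t : ℕ) (ζ : ℂ) : ℂ :=
  (if t = p then 1 else 0) + ζ ^ 2 ^ (n - t) * forwardSubst (bracketExp n) (bracketRhs n p q) t ζ

theorem sum_range_bracketCoeff_mul {n p q a : ℕ} (hqp : q ≤ p) (han : a ≤ n) (ζ : ℂ) :
    ∑ t ∈ range (a + 1), bracketCoeff n p q t ζ * ζ ^ (t * 2 ^ (n - a)) =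
      if q ≤ a then ζ ^ (p * 2 ^ (n - a)) else 0 := by
  have hdiag : ∑ t ∈ range (a + 1), (if t = p then 1 else 0) * ζ ^ (t * 2 ^ (n - a)) =
      if p ≤ a then ζ ^ (p * 2 ^ (n - a)) else 0 := by
    simp [ite_mul]
  have hterm : ∀ t, ζ ^ 2 ^ (n - t) * forwardSubst (bracketExp n) (bracketRhs n p q) t ζ *
      ζ ^ (t * 2 ^ (n - a)) =
        ζ ^ bracketExp n a t * forwardSubst (bracketExp n) (bracketRhs n p q) t ζ := fun t => by
    rw [bracketExp, pow_add]; ring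
  have hrhs : ζ ^ bracketExp n a a * bracketRhs n p q a ζ =
      if q ≤ a ∧ a < p then ζ ^ (p * 2 ^ (n - a)) else 0 := by
    rw [bracketRhs]
    split_ifs with h
    · refine pow_mul_pow_sub _ ?_
      rw [bracketExp, ← add_one_mul]
      exact Nat.mul_le_mul_right _ h.2
    · rw [mul_zero]
  simp only [bracketCoeff, add_mul, sum_add_distrib, hdiag, hterm]
  rw [sum_pow_mul_forwardSubst _ _ (fun t ht => bracketExp_le ht.le han), hrhs]
  split_ifs <;> first | omega | simp

theorem tendsto_bracketCoeff (n p q t : ℕ) :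
    Tendsto (bracketCoeff n p q t) (𝓝[≠] 0) (𝓝 (if t = p then 1 else 0)) := by
  have hcont : Continuous (bracketCoeff n p q t) :=
    continuous_const.add <| (continuous_pow _).mul <| continuous_forwardSubst _ (fun a => by
      unfold bracketRhs; split_ifs <;> fun_prop) t
  have hzero : bracketCoeff n p q t 0 = if t = p then 1 else 0 := by
    simp [bracketCoeff]
  exact hzero ▸ (hcont.tendsto 0).mono_left nhdsWithin_le_nhds

section Contraction

variable (n : ℕ)

noncomputable def contractionMatrix (ζ : ℂ) : Matrix (Fin (n + 1)) (Fin (n + 1)) ℂ :=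
  Matrix.of fun s t => if (s : ℕ) + t ≤ n then ζ ^ ((t : ℕ) * 2 ^ (s : ℕ)) else 0

theorem Yzeta_apply {g : Type*} [AddCommGroup g] [Module ℂ g] {r : ℕ}
    (b : Module.Basis (Fin r) ℂ g) (ζ : ℂ) (t : Fin (n + 1)) (k : Fin r) (s : Fin (n + 1)) :
    Yzeta n b ζ t k s = contractionMatrix n ζ s t • b k := by
  have ht := t.isLt
  by_cases h : (s : ℕ) + t ≤ n
  · rw [Yzeta, contractionMatrix, Matrix.of_apply, if_pos h, if_pos (by omega)]
  · rw [Yzeta, contractionMatrix, Matrix.of_apply, if_neg h, if_neg (by omega), zero_smul]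

theorem det_contractionMatrix_ne_zero {ζ : ℂ} (hζ : ζ ≠ 0) :
    (contractionMatrix n ζ).det ≠ 0 := by
  have htri : (contractionMatrix n ζ).submatrix id Fin.revPerm |>.IsUpperTriangular := by
    intro s t hts
    simp only [Matrix.submatrix_apply, contractionMatrix, Matrix.of_apply, id, Fin.revPerm_apply,
      Fin.val_rev]
    rw [if_neg (by have : (t : ℕ) < s := hts; omega)]
  have hdet := Matrix.det_permute' Fin.revPerm (contractionMatrix n ζ)
  rw [Matrix.det_of_isUpperTriangular htri] at hdet
  intro h0
  rw [h0, mul_zero] at hdet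
  refine (Finset.prod_ne_zero_iff.mpr fun s _ => ?_) hdet
  simp only [Matrix.submatrix_apply, contractionMatrix, Matrix.of_apply, id, Fin.revPerm_apply,
    Fin.val_rev]
  rw [if_pos (by omega)]
  exact pow_ne_zero _ hζ

theorem sum_bracketCoeff_mul_contractionMatrix {p q : ℕ} (hqp : q ≤ p) (ζ : ℂ)
    (s : Fin (n + 1)) :
    ∑ t : Fin (n + 1), bracketCoeff n p q t ζ * contractionMatrix n ζ s t =
      if (s : ℕ) + q ≤ n then ζ ^ (p * 2 ^ (s : ℕ)) else 0 := by
  obtain ⟨a, han, hsa⟩ : ∃ a ≤ n, (s : ℕ) = n - a := ⟨n - s, by omega, by omega⟩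
  have hrange : (range (n + 1)).filter (fun t => n - a + t ≤ n) = range (a + 1) := by
    ext; simp only [mem_filter, mem_range]; omega
  simp only [contractionMatrix, Matrix.of_apply, mul_ite, mul_zero, hsa]
  rw [Fin.sum_univ_eq_sum_range
    (fun t => if n - a + t ≤ n then bracketCoeff n p q t ζ * ζ ^ (t * 2 ^ (n - a)) else 0),
    ← sum_filter, hrange, sum_range_bracketCoeff_mul hqp han]
  simp only [show n - a + q ≤ n ↔ q ≤ a by omega]

theorem contractionMatrix_apply_mul_apply (ζ : ℂ) (s l m : Fin (n + 1)) :
    contractionMatrix n ζ s l * contractionMatrix n ζ s m =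
      if (s : ℕ) + max (l : ℕ) m ≤ n then ζ ^ (((l : ℕ) + m) * 2 ^ (s : ℕ)) else 0 := by
  simp only [contractionMatrix, Matrix.of_apply]
  split_ifs <;> first | omega | rw [add_mul, pow_add] | simp

theorem sum_smul_Yzeta_apply {g : Type*} [AddCommGroup g] [Module ℂ g] {r : ℕ}
    (b : Module.Basis (Fin r) ℂ g) (ζ : ℂ) (w : Fin (n + 1) → Fin r → ℂ) (s : Fin (n + 1)) :
    (∑ t : Fin (n + 1), ∑ k : Fin r, w t k • Yzeta n b ζ t k) s =
      ∑ k : Fin r, (∑ t : Fin (n + 1), w t k * contractionMatrix n ζ s t) • b k := by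
  simp only [Finset.sum_apply, Pi.smul_apply, Yzeta_apply, smul_smul, Finset.sum_smul]
  exact Finset.sum_comm

end Contraction

/-- For every `ζ ≠ 0` the `Y^{(l)}_i(ζ)` form a basis of `g^n`, and as `ζ → 0` the
structure constants of the componentwise (direct sum) Lie bracket with respect to this
basis converge to the structure constants of the polynomial Lie algebra `g^{(n)}`:
the coordinate of `⁅Y^{(l)}_i(ζ), Y^{(m)}_j(ζ)⁆` along `Y^{(s)}_k(ζ)` tends to
`c^k_{ij}` if `l + m ≤ n` and `s = l + m`, and to `0` otherwise. -/
theorem stmt5 {g : Type*} [LieRing g] [LieAlgebra ℂ g] {r : ℕ}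
    (n : ℕ) (b : Module.Basis (Fin r) ℂ g) (c : Fin r → Fin r → Fin r → ℂ)
    (hc : ∀ i j : Fin r, ⁅b i, b j⁆ = ∑ k : Fin r, c i j k • b k) :
    (∀ ζ : ℂ, ζ ≠ 0 →
      LinearIndependent ℂ (fun p : Fin (n + 1) × Fin r => Yzeta n b ζ (p.1 : ℕ) p.2) ∧
      Submodule.span ℂ
        (Set.range fun p : Fin (n + 1) × Fin r => Yzeta n b ζ (p.1 : ℕ) p.2) = ⊤) ∧
    (∀ (l m : Fin (n + 1)) (i j : Fin r),
      ∃ coef : ℂ → Fin (n + 1) → Fin r → ℂ,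
        (∀ ζ : ℂ, ζ ≠ 0 →
          (fun s : Fin (n + 1) => ⁅Yzeta n b ζ (l : ℕ) i s, Yzeta n b ζ (m : ℕ) j s⁆) =
            ∑ s : Fin (n + 1), ∑ k : Fin r, coef ζ s k • Yzeta n b ζ (s : ℕ) k) ∧
        (∀ (s : Fin (n + 1)) (k : Fin r),
          Filter.Tendsto (fun ζ : ℂ => coef ζ s k) (𝓝[≠] (0 : ℂ))
            (𝓝 (if (l : ℕ) + (m : ℕ) ≤ n ∧ (s : ℕ) = (l : ℕ) + (m : ℕ) then c i j k
                else 0)))) := by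
  refine ⟨fun ζ hζ => ?_, fun l m i j => ?_⟩
  · have hli : LinearIndependent ℂ fun p : Fin (n + 1) × Fin r => Yzeta n b ζ p.1 p.2 := by
      simpa only [← Yzeta_apply] using
        linearIndependent_matrix_smul (det_contractionMatrix_ne_zero n hζ) b.linearIndependent
    have : Module.Finite ℂ g := .of_basis b
    refine ⟨hli, hli.span_eq_top_of_card_eq_finrank' ?_⟩
    simp [Module.finrank_pi_fintype, Module.finrank_eq_card_basis b]
  · have hqp : max (l : ℕ) m ≤ l + m := max_le (Nat.le_add_right _ _) (Nat.le_add_left _ _)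
    refine ⟨fun ζ t k => c i j k * bracketCoeff n (l + m) (max l m) t ζ, fun ζ _ => ?_,
      fun t k => ?_⟩
    · funext s
      rw [sum_smul_Yzeta_apply, Yzeta_apply, Yzeta_apply, smul_lie, lie_smul, smul_smul,
        contractionMatrix_apply_mul_apply, hc, Finset.smul_sum]
      refine Finset.sum_congr rfl fun k _ => ?_
      rw [smul_smul, mul_comm, ← sum_bracketCoeff_mul_contractionMatrix n hqp, Finset.mul_sum]
      simp only [mul_assoc]
    · have htarget : (if (l : ℕ) + m ≤ n ∧ (t : ℕ) = l + m then c i j k else 0) =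
          c i j k * if (t : ℕ) = l + m then 1 else 0 := by
        split_ifs <;> first | omega | simp
      exact htarget ▸ (tendsto_bracketCoeff n _ _ t).const_mul (c i j k)
end

section
/- For every k with 0 ≤ k ≤ n and every index p, there exist polynomials q^k_0,…,q^k_k ∈ ℂ[u] with deg(q^k_j) = 2^k − 2^j for 0 ≤ j ≤ k (in particular q^k_k is a nonzero constant, equal to 1) such that for all ζ ≠ 0, ζ^{2^k(n−k)} X^(k)_p = Σ_{j=0}^k q^k_j(ζ^{−1}) Y^{(n−j)}_p(ζ). -/
open scoped BigOperators

open Finset Polynomial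

/-- The polynomial `q^k_j`; for `j > k` the sum is empty, so the value is `0`. -/
noncomputable def contractionPoly (R : Type*) [CommRing R] (k j : ℕ) : R[X] :=
  if j = k then 1
  else -∑ i ∈ (Ioc j k).attach, X ^ ((i - j) * 2 ^ j) * contractionPoly R k i
termination_by k - j
decreasing_by have := mem_Ioc.1 i.2; omega

section contractionPoly

variable (R : Type*) [CommRing R] (k : ℕ)

@[simp]
theorem contractionPoly_self : contractionPoly R k k = 1 := by
  rw [contractionPoly, if_pos rfl]

theorem contractionPoly_of_ne {j : ℕ} (h : j ≠ k) :
    contractionPoly R k j = -∑ i ∈ Ioc j k, X ^ ((i - j) * 2 ^ j) * contractionPoly R k i := by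
  rw [contractionPoly, if_neg h,
    sum_attach (Ioc j k) fun i => X ^ ((i - j) * 2 ^ j) * contractionPoly R k i]

theorem sum_Icc_X_pow_mul_contractionPoly (c : ℕ) :
    ∑ i ∈ Icc c k, X ^ ((i - c) * 2 ^ c) * contractionPoly R k i = if c = k then 1 else 0 := by
  rcases lt_trichotomy c k with hck | rfl | hkc
  · rw [Icc_eq_cons_Ioc hck.le, sum_cons, contractionPoly_of_ne R k hck.ne, if_neg hck.ne]
    simp
  · simp
  · simp [Icc_eq_empty_of_lt hkc, hkc.ne']

theorem sub_add_one_mul_two_pow_lt {i j : ℕ} (h : j + 2 ≤ i) : (i - j + 1) * 2 ^ j < 2 ^ i := by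
  obtain ⟨e, rfl⟩ := Nat.exists_eq_add_of_le h
  have := Nat.lt_two_pow_self (n := e)
  rw [show j + 2 + e - j + 1 = e + 3 by omega, pow_add, pow_add, mul_comm, mul_assoc]
  gcongr
  omega

theorem natDegree_contractionPoly [Nontrivial R] {j : ℕ} (hj : j ≤ k) :
    (contractionPoly R k j).natDegree + 2 ^ j = 2 ^ k ∧
      (contractionPoly R k j).leadingCoeff = (-1) ^ (k - j) := by
  rcases hj.eq_or_lt with rfl | hjk
  · simp
  set f : ℕ → R[X] := fun i => X ^ ((i - j) * 2 ^ j) * contractionPoly R k i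
  have hf : ∀ i ∈ Ioc j k, (f i).natDegree + 2 ^ i = (i - j) * 2 ^ j + 2 ^ k ∧
      (f i).leadingCoeff = (-1) ^ (k - i) := by
    intro i hi
    obtain ⟨hji, hik⟩ := mem_Ioc.1 hi
    obtain ⟨hdeg, hlc⟩ := natDegree_contractionPoly (j := i) hik
    have hne : contractionPoly R k i ≠ 0 :=
      leadingCoeff_ne_zero.1 (hlc ▸ (isUnit_neg_one.pow _).ne_zero)
    refine ⟨?_, by simp [f, leadingCoeff_monic_mul (monic_X_pow _), hlc]⟩
    simp only [f, natDegree_X_pow_mul _ hne]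
    omega
  obtain ⟨hdeg₁, hlc₁⟩ := hf (j + 1) (by simp [hjk])
  have hpow : 2 ^ (j + 1) ≤ 2 ^ k := Nat.pow_le_pow_right two_pos hjk
  rw [add_tsub_cancel_left, one_mul, pow_succ] at hdeg₁
  rw [pow_succ] at hpow
  have hrest : (∑ i ∈ Ioc (j + 1) k, f i).natDegree < (f (j + 1)).natDegree := by
    have hpos : 0 < (f (j + 1)).natDegree := by
      have : 0 < 2 ^ j := by positivity
      omega
    refine Nat.lt_of_le_pred hpos (natDegree_sum_le_of_forall_le _ _ fun i hi => ?_)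
    rw [Nat.le_pred_iff_lt hpos]
    obtain ⟨hji, hik⟩ := mem_Ioc.1 hi
    have := sub_add_one_mul_two_pow_lt hji
    rw [add_one_mul] at this
    have := (hf i (mem_Ioc.2 ⟨by omega, hik⟩)).1
    omega
  rw [contractionPoly_of_ne R k hjk.ne, ← Icc_add_one_left_eq_Ioc, Icc_eq_cons_Ioc hjk, sum_cons,
    natDegree_neg, leadingCoeff_neg, natDegree_add_eq_left_of_natDegree_lt hrest,
    leadingCoeff_add_of_degree_lt' (degree_lt_degree hrest), hlc₁]
  refine ⟨by omega, ?_⟩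
  rw [show k - j = k - (j + 1) + 1 by omega, pow_succ]
  ring
termination_by k - j

end contractionPoly

theorem sum_eval_inv_contractionPoly_mul {K : Type*} [Field K] {ζ : K} (hζ : ζ ≠ 0) {k n : ℕ}
    (hk : k ≤ n) (c : ℕ) :
    ∑ j ∈ range (k + 1), (contractionPoly K k j).eval ζ⁻¹ *
        (if c ≤ j then ζ ^ ((n - j) * 2 ^ c) else 0) =
      if c = k then ζ ^ (2 ^ k * (n - k)) else 0 := by
  have hIcc : (range (k + 1)).filter (c ≤ ·) = Icc c k := by
    ext j
    simp only [mem_filter, mem_range, mem_Icc]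
    omega
  have hterm : ∀ j ∈ Icc c k, (contractionPoly K k j).eval ζ⁻¹ * ζ ^ ((n - j) * 2 ^ c) =
      ζ ^ ((n - c) * 2 ^ c) * (X ^ ((j - c) * 2 ^ c) * contractionPoly K k j).eval ζ⁻¹ := by
    intro j hj
    obtain ⟨hcj, hjk⟩ := mem_Icc.1 hj
    rw [eval_mul, eval_pow, eval_X, show n - c = (n - j) + (j - c) by omega, add_mul, pow_add,
      inv_pow, mul_comm]
    field_simp
  simp_rw [mul_ite, mul_zero]
  rw [← sum_filter, hIcc, sum_congr rfl hterm, ← mul_sum, ← eval_finsetSum,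
    sum_Icc_X_pow_mul_contractionPoly]
  split_ifs with hck
  · rw [hck, eval_one, mul_one, mul_comm]
  · rw [eval_zero, mul_zero]

theorem Yzeta_sub_apply {g : Type*} [AddCommGroup g] [Module ℂ g] {r : ℕ} {n j : ℕ} (hj : j ≤ n)
    (b : Module.Basis (Fin r) ℂ g) (ζ : ℂ) (i : Fin r) (s : Fin (n + 1)) :
    Yzeta n b ζ (n - j) i s = if (s : ℕ) ≤ j then ζ ^ ((n - j) * 2 ^ (s : ℕ)) • b i else 0 := by
  rw [Yzeta, Nat.sub_sub_self hj]

/-- For `0 ≤ k ≤ n` there are polynomials `q^k_0, …, q^k_k` with `deg q^k_j = 2^k − 2^j`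
(and `q^k_k = 1`) such that for all `ζ ≠ 0`,
`ζ^{2^k(n−k)} X^{(k)}_p = ∑_{j=0}^k q^k_j(ζ⁻¹) Y^{(n−j)}_p(ζ)`, where `X^{(k)}_p` is the
element of `g^n` whose only nonzero component is `b p` in the `k`-th copy. -/
theorem stmt6 {g : Type*} [AddCommGroup g] [Module ℂ g] {r : ℕ}
    (n k : ℕ) (hk : k ≤ n) (b : Module.Basis (Fin r) ℂ g) (p : Fin r) :
    ∃ q : ℕ → Polynomial ℂ,
      (∀ j : ℕ, j ≤ k → (q j).natDegree = 2 ^ k - 2 ^ j) ∧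
      q k = 1 ∧
      ∀ ζ : ℂ, ζ ≠ 0 →
        (fun s : Fin (n + 1) => if (s : ℕ) = k then ζ ^ (2 ^ k * (n - k)) • (b p) else 0) =
          ∑ j ∈ Finset.range (k + 1), (q j).eval ζ⁻¹ • Yzeta n b ζ (n - j) p := by
  refine ⟨contractionPoly ℂ k, fun j hj => ?_, contractionPoly_self ℂ k, fun ζ hζ => ?_⟩
  · have := (natDegree_contractionPoly ℂ k hj).1
    omega
  funext s
  have hY : ∀ j ∈ range (k + 1), (contractionPoly ℂ k j).eval ζ⁻¹ • Yzeta n b ζ (n - j) p s =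
      ((contractionPoly ℂ k j).eval ζ⁻¹ *
        if (s : ℕ) ≤ j then ζ ^ ((n - j) * 2 ^ (s : ℕ)) else 0) • b p := by
    intro j hj
    rw [Yzeta_sub_apply (by have := mem_range.1 hj; omega), mul_ite, mul_zero, ite_smul, smul_ite,
      zero_smul, smul_zero, mul_smul]
  rw [Finset.sum_apply, sum_congr rfl fun j hj => by rw [Pi.smul_apply, hY j hj], ← sum_smul,
    sum_eval_inv_contractionPoly_mul hζ hk, ite_smul, zero_smul]
end

section
/- Let B be a symmetric bilinear form on g, let a_0,…,a_n be complex numbers with a_n ≠ 0, and for ζ ≠ 0 let d_0(ζ),…,d_n(ζ) be the unique solution of the system Σ_{l=0}^{n−k} ζ^{k·2^l} d_l(ζ) = a_k, k = 0,…,n. Define the modified inner product on g^n = ⊕_{l=0}^n g by ⟨X,Y⟩^n(ζ) = Σ_{l=0}^n d_l(ζ) B(X_l, Y_l). Then for all indices p, q and all j, k with 0 ≤ j,k ≤ n: lim_{ζ→0} ⟨Y^(j)_p(ζ), Y^(k)_q(ζ)⟩^n(ζ) = a_{j+k} B(X_p, X_q) if j+k ≤ n, and = 0 if j+k > n. -/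
open scoped BigOperators Topology

/-!
Row `n - l` of the triangular system, multiplied by `ζ ^ 2 ^ l`, expresses
`ζ ^ (2 ^ l * (n - l + 1)) * d ζ l` through `a (n - l)` and the `d ζ s` with `s < l`; since
`2 ^ s * (n - s + 1) ≤ 2 ^ l + (n - l) * 2 ^ s`, induction on `l` shows that it tends to `0`.
The pairing of `Y^{(j)}_p(ζ)` and `Y^{(k)}_q(ζ)` is `B(X_p, X_q)` times
`∑_{l ≤ n - max j k} ζ ^ ((j + k) * 2 ^ l) * d ζ l`. The terms with `l ≤ n - (j + k)` sum to
`a (j + k)` by row `j + k` of the system, and every other term has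
`(j + k) * 2 ^ l ≥ 2 ^ l * (n - l + 1)`, so it vanishes in the limit.
-/

section PowerGrowth

variable {R : Type*} [CommRing R] [TopologicalSpace R] [IsTopologicalRing R]

theorem tendsto_pow_mul_of_le {f : R → R} {c E : ℕ} (hcE : c ≤ E)
    (hf : Filter.Tendsto (fun ζ => ζ ^ c * f ζ) (𝓝[≠] 0) (𝓝 0)) :
    Filter.Tendsto (fun ζ => ζ ^ E * f ζ) (𝓝[≠] 0) (𝓝 0) := by
  have hpow : Filter.Tendsto (fun ζ : R => ζ ^ (E - c)) (𝓝[≠] 0) (𝓝 (0 ^ (E - c))) :=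
    ((continuous_pow (E - c)).tendsto 0).mono_left nhdsWithin_le_nhds
  simpa [← mul_assoc, ← pow_add, Nat.sub_add_cancel hcE] using hpow.mul hf

theorem two_pow_mul_sub_add_one_le {s l n : ℕ} (hsl : s ≤ l) (hln : l ≤ n) :
    2 ^ s * (n - s + 1) ≤ 2 ^ l + (n - l) * 2 ^ s := by
  have hgap : 2 ^ s * (l - s + 1) ≤ 2 ^ l := by
    calc 2 ^ s * (l - s + 1) ≤ 2 ^ s * 2 ^ (l - s) :=
          Nat.mul_le_mul_left _ Nat.lt_two_pow_self
      _ = 2 ^ l := by rw [← pow_add, Nat.add_sub_cancel' hsl]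
  calc 2 ^ s * (n - s + 1) = 2 ^ s * (l - s + 1) + (n - l) * 2 ^ s := by
        rw [show n - s + 1 = (n - l) + (l - s + 1) by omega]; ring
    _ ≤ 2 ^ l + (n - l) * 2 ^ s := by omega

variable {n : ℕ} {a : ℕ → R} {d : R → ℕ → R}
  (hd : ∀ ζ : R, ζ ≠ 0 → ∀ k : ℕ, k ≤ n →
    ∑ l ∈ Finset.range (n - k + 1), ζ ^ (k * 2 ^ l) * d ζ l = a k)
include hd

theorem tendsto_pow_mul_solution_of_le {l : ℕ} (hl : l ≤ n) :
    Filter.Tendsto (fun ζ => ζ ^ (2 ^ l * (n - l + 1)) * d ζ l) (𝓝[≠] 0) (𝓝 0) := by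
  induction l using Nat.strong_induction_on with
  | _ l ih =>
  have hrow : ∀ ζ : R, ζ ≠ 0 → ζ ^ (2 ^ l * (n - l + 1)) * d ζ l =
      ζ ^ 2 ^ l * a (n - l) - ∑ s ∈ Finset.range l, ζ ^ (2 ^ l + (n - l) * 2 ^ s) * d ζ s := by
    intro ζ hζ
    have h := hd ζ hζ (n - l) (Nat.sub_le n l)
    rw [Nat.sub_sub_self hl, Finset.sum_range_succ] at h
    simp only [pow_add, mul_assoc, ← Finset.mul_sum]
    linear_combination ζ ^ 2 ^ l * h
  have hfirst : Filter.Tendsto (fun ζ : R => ζ ^ 2 ^ l * a (n - l)) (𝓝[≠] 0) (𝓝 0) := by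
    have hpow : Filter.Tendsto (fun ζ : R => ζ ^ 2 ^ l) (𝓝[≠] 0) (𝓝 0) :=
      ((continuous_pow _).tendsto' 0 0 (zero_pow (pow_ne_zero _ two_ne_zero))).mono_left
        nhdsWithin_le_nhds
    simpa using hpow.mul_const (a (n - l))
  have hrest : Filter.Tendsto
      (fun ζ : R => ∑ s ∈ Finset.range l, ζ ^ (2 ^ l + (n - l) * 2 ^ s) * d ζ s)
      (𝓝[≠] 0) (𝓝 0) := by
    simpa using tendsto_finsetSum (Finset.range l) fun s hs =>
      have hsl : s < l := Finset.mem_range.mp hs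
      tendsto_pow_mul_of_le (two_pow_mul_sub_add_one_le hsl.le hl) (ih s hsl (hsl.le.trans hl))
  have hlim := hfirst.sub hrest
  rw [sub_zero] at hlim
  refine hlim.congr' ?_
  filter_upwards [self_mem_nhdsWithin] with ζ hζ
  exact (hrow ζ hζ).symm

theorem tendsto_pow_mul_solution {m l : ℕ} (hl : l ≤ n) (hml : n < m + l) :
    Filter.Tendsto (fun ζ => ζ ^ (m * 2 ^ l) * d ζ l) (𝓝[≠] 0) (𝓝 0) :=
  tendsto_pow_mul_of_le (by rw [mul_comm]; gcongr; omega) (tendsto_pow_mul_solution_of_le hd hl)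

theorem tendsto_sum_pow_mul_solution {m L : ℕ} (hL : L ≤ n) (hmL : n - m ≤ L) :
    Filter.Tendsto (fun ζ => ∑ l ∈ Finset.range (L + 1), ζ ^ (m * 2 ^ l) * d ζ l) (𝓝[≠] 0)
      (𝓝 (if m ≤ n then a m else 0)) := by
  rcases le_or_gt m n with hmn | hmn
  · rw [if_pos hmn]
    have htail : Filter.Tendsto
        (fun ζ => ∑ l ∈ Finset.Ico (n - m + 1) (L + 1), ζ ^ (m * 2 ^ l) * d ζ l)
        (𝓝[≠] 0) (𝓝 0) := by
      simpa using tendsto_finsetSum _ fun l hl =>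
        have hl' := Finset.mem_Ico.mp hl
        tendsto_pow_mul_solution hd (by omega) (by omega)
    have hlim := htail.const_add (a m)
    rw [add_zero] at hlim
    refine hlim.congr' ?_
    filter_upwards [self_mem_nhdsWithin] with ζ hζ
    rw [← Finset.sum_range_add_sum_Ico _ (by omega : n - m + 1 ≤ L + 1), hd ζ hζ m hmn]
  · rw [if_neg hmn.not_ge]
    simpa using tendsto_finsetSum _ fun l hl =>
      tendsto_pow_mul_solution hd (Nat.lt_succ_iff.mp (Finset.mem_range.mp hl) |>.trans hL)
        (by omega)

end PowerGrowth

section Pairing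

variable {g : Type*} [AddCommGroup g] [Module ℂ g] {r : ℕ} (n : ℕ) (b : Module.Basis (Fin r) ℂ g)
  (B : g →ₗ[ℂ] g →ₗ[ℂ] ℂ)

theorem pairing_Yzeta (ζ : ℂ) (j k : ℕ) (p q : Fin r) (s : Fin (n + 1)) :
    B (Yzeta n b ζ j p s) (Yzeta n b ζ k q s) =
      if (s : ℕ) ≤ n - max j k then ζ ^ ((j + k) * 2 ^ (s : ℕ)) * B (b p) (b q) else 0 := by
  simp only [Yzeta, show (s : ℕ) ≤ n - max j k ↔ (s : ℕ) ≤ n - j ∧ (s : ℕ) ≤ n - k by omega]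
  split_ifs <;> simp_all [add_mul, pow_add, mul_assoc, mul_left_comm]

theorem sum_pairing_Yzeta (d : ℂ → ℕ → ℂ) (ζ : ℂ) (j k : ℕ) (p q : Fin r) :
    ∑ s : Fin (n + 1), d ζ s * B (Yzeta n b ζ j p s) (Yzeta n b ζ k q s) =
      (∑ l ∈ Finset.range (n - max j k + 1), ζ ^ ((j + k) * 2 ^ l) * d ζ l) * B (b p) (b q) := by
  simp only [pairing_Yzeta, mul_ite, mul_zero]
  rw [Fin.sum_univ_eq_sum_range (fun l => if l ≤ n - max j k then
      d ζ l * (ζ ^ ((j + k) * 2 ^ l) * B (b p) (b q)) else 0), ← Finset.sum_filter,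
    show (Finset.range (n + 1)).filter (· ≤ n - max j k) = Finset.range (n - max j k + 1) by
      ext; simp only [Finset.mem_filter, Finset.mem_range]; omega, Finset.sum_mul]
  exact Finset.sum_congr rfl fun _ _ => by ring

end Pairing

theorem stmt8_general {g : Type*} [AddCommGroup g] [Module ℂ g] {r : ℕ}
    (n : ℕ) (b : Module.Basis (Fin r) ℂ g) (B : g →ₗ[ℂ] g →ₗ[ℂ] ℂ)
    (a : ℕ → ℂ)
    (d : ℂ → ℕ → ℂ)
    (hd : ∀ ζ : ℂ, ζ ≠ 0 → ∀ k : ℕ, k ≤ n →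
      ∑ l ∈ Finset.range (n - k + 1), ζ ^ (k * 2 ^ l) * d ζ l = a k)
    (p q : Fin r) (j k : ℕ) :
    Filter.Tendsto
      (fun ζ : ℂ =>
        ∑ l : Fin (n + 1), d ζ (l : ℕ) * B (Yzeta n b ζ j p l) (Yzeta n b ζ k q l))
      (𝓝[≠] (0 : ℂ))
      (𝓝 (if j + k ≤ n then a (j + k) * B (b p) (b q) else 0)) := by
  simp only [sum_pairing_Yzeta]
  rw [show (if j + k ≤ n then a (j + k) * B (b p) (b q) else 0) =
      (if j + k ≤ n then a (j + k) else 0) * B (b p) (b q) by rw [ite_mul, zero_mul]]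
  exact (tendsto_sum_pow_mul_solution hd (by omega) (by omega)).mul_const _

/-- Let `d_0(ζ),…,d_n(ζ)` solve `∑_{l=0}^{n-k} ζ^{k·2^l} d_l(ζ) = a_k` (`k = 0,…,n`) with
`a_n ≠ 0`, and define the modified inner product
`⟨X,Y⟩^n(ζ) = ∑_{l=0}^n d_l(ζ) B(X_l, Y_l)` on `g^n`. Then
`lim_{ζ→0} ⟨Y^{(j)}_p(ζ), Y^{(k)}_q(ζ)⟩^n(ζ) = a_{j+k} B(X_p, X_q)` if `j + k ≤ n`,
and `= 0` if `j + k > n`. -/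
theorem stmt8 {g : Type*} [AddCommGroup g] [Module ℂ g] {r : ℕ}
    (n : ℕ) (b : Module.Basis (Fin r) ℂ g) (B : g →ₗ[ℂ] g →ₗ[ℂ] ℂ)
    (hBsymm : ∀ x y : g, B x y = B y x)
    (a : ℕ → ℂ) (han : a n ≠ 0)
    (d : ℂ → ℕ → ℂ)
    (hd : ∀ ζ : ℂ, ζ ≠ 0 → ∀ k : ℕ, k ≤ n →
      ∑ l ∈ Finset.range (n - k + 1), ζ ^ (k * 2 ^ l) * d ζ l = a k)
    (p q : Fin r) (j k : ℕ) (hj : j ≤ n) (hk : k ≤ n) :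
    Filter.Tendsto
      (fun ζ : ℂ =>
        ∑ l : Fin (n + 1), d ζ (l : ℕ) * B (Yzeta n b ζ j p l) (Yzeta n b ζ k q l))
      (𝓝[≠] (0 : ℂ))
      (𝓝 (if j + k ≤ n then a (j + k) * B (b p) (b q) else 0)) :=
  stmt8_general n b B a d hd p q j k
end

section
/- In CL ⊗ ℂ[λ]/(λ^{n+1}), define Ψ(E^k_{ij}) = (1/(k+1)) Σ_{l=0}^k ψ^(k−l)_i ψ*^(l)_j for i, j ∈ ℤ and 0 ≤ k ≤ n. Then these elements realize the polynomial Lie algebra gl^(n)_∞: for all i, j, l, m ∈ ℤ and 0 ≤ k, s ≤ n, [Ψ(E^k_{ij}), Ψ(E^s_{lm})] = δ_{jl} Ψ(E^{k+s}_{im}) − δ_{im} Ψ(E^{k+s}_{lj}) if k+s ≤ n, and [Ψ(E^k_{ij}), Ψ(E^s_{lm})] = 0 if k+s > n. -/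
open scoped BigOperators TensorProduct

/-- The ideal `(λ^{n+1})` of `ℂ[λ]`. -/
noncomputable def truncIdeal (n : ℕ) : Ideal (Polynomial ℂ) :=
  Ideal.span {Polynomial.X ^ (n + 1)}

/-- In `CL ⊗ ℂ[λ]/(λ^{n+1})`, the element `ψ^{(s)}_i = ψ_i ⊗ λ^s` associated to a family
`ψ : ℤ → CL`. -/
noncomputable def psiT (n : ℕ) {A : Type*} [Ring A] [Algebra ℂ A] (ψ : ℤ → A)
    (i : ℤ) (s : ℕ) : A ⊗[ℂ] (Polynomial ℂ ⧸ truncIdeal n) :=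
  ψ i ⊗ₜ[ℂ] Ideal.Quotient.mk (truncIdeal n) (Polynomial.X ^ s)

/-- `Ψ(E^k_{ij}) = (1/(k+1)) ∑_{l=0}^k ψ^{(k−l)}_i ψ*^{(l)}_j` in `CL ⊗ ℂ[λ]/(λ^{n+1})`. -/
noncomputable def PsiE (n : ℕ) {A : Type*} [Ring A] [Algebra ℂ A] (ψ ψs : ℤ → A)
    (i j : ℤ) (k : ℕ) : A ⊗[ℂ] (Polynomial ℂ ⧸ truncIdeal n) :=
  ((k : ℂ) + 1)⁻¹ • ∑ l ∈ Finset.range (k + 1), psiT n ψ i (k - l) * psiT n ψs j l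

/-!
The map `E^k_{ij} ↦ ψ_i ψ*_j ⊗ λ^k` is the tensor product of the fermionic realization
`E_{ij} ↦ ψ_i ψ*_j` of `gl_∞` with the identity of `ℂ[λ]/(λ^{n+1})`: all `k + 1` summands of
`Ψ(E^k_{ij})` equal `ψ_i ψ*_j ⊗ λ^k`, which cancels the factor `1/(k+1)`. Since the second tensor
factor is commutative, commutators are computed in `CL` alone, where the anticommutation relations
give `[ψ_i ψ*_j, ψ_l ψ*_m] = δ_{jl} ψ_i ψ*_m − δ_{im} ψ_l ψ*_j`; finally `λ^{k+s} = 0` once `k + s > n`.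
-/

theorem commutator_mul_mul_eq_anticomm {R : Type*} [Ring R] (a b c d : R) :
    a * b * (c * d) - c * d * (a * b) =
      a * (b * c + c * b) * d - a * c * (b * d + d * b)
        + (a * c + c * a) * d * b - c * (a * d + d * a) * b := by
  noncomm_ring

theorem commutator_mul_mul_of_car {R : Type*} [Ring R] (ψ ψs : ℤ → R)
    (h1 : ∀ i j : ℤ, ψ i * ψ j + ψ j * ψ i = 0)
    (h2 : ∀ i j : ℤ, ψs i * ψs j + ψs j * ψs i = 0)
    (h3 : ∀ i j : ℤ, ψ i * ψs j + ψs j * ψ i = if i = j then 1 else 0) (i j l m : ℤ) :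
    ψ i * ψs j * (ψ l * ψs m) - ψ l * ψs m * (ψ i * ψs j) =
      (if j = l then ψ i * ψs m else 0) - (if i = m then ψ l * ψs j else 0) := by
  have h3' : ψs j * ψ l + ψ l * ψs j = if j = l then 1 else 0 := by
    rw [add_comm, h3]; exact if_congr eq_comm rfl rfl
  rw [commutator_mul_mul_eq_anticomm, h3', h2, h1, h3]
  split_ifs <;> simp

theorem tmul_commutator_tmul {R A B : Type*} [CommSemiring R] [Ring A] [Algebra R A]
    [CommSemiring B] [Algebra R B] (x y : A) (p q : B) :
    x ⊗ₜ[R] p * y ⊗ₜ[R] q - y ⊗ₜ[R] q * x ⊗ₜ[R] p = (x * y - y * x) ⊗ₜ[R] (p * q) := by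
  rw [Algebra.TensorProduct.tmul_mul_tmul, Algebra.TensorProduct.tmul_mul_tmul, mul_comm q,
    TensorProduct.sub_tmul]

theorem truncIdeal_mk_X_pow_eq_zero {n k : ℕ} (hk : n < k) :
    Ideal.Quotient.mk (truncIdeal n) (Polynomial.X ^ k) = 0 := by
  rw [Ideal.Quotient.eq_zero_iff_mem, truncIdeal, Ideal.mem_span_singleton]
  exact pow_dvd_pow _ hk

theorem PsiE_eq_tmul (n : ℕ) {A : Type*} [Ring A] [Algebra ℂ A] (ψ ψs : ℤ → A)
    (i j : ℤ) (k : ℕ) :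
    PsiE n ψ ψs i j k =
      (ψ i * ψs j) ⊗ₜ[ℂ] Ideal.Quotient.mk (truncIdeal n) (Polynomial.X ^ k) := by
  have summand_eq : ∀ l ∈ Finset.range (k + 1), psiT n ψ i (k - l) * psiT n ψs j l =
      (ψ i * ψs j) ⊗ₜ[ℂ] Ideal.Quotient.mk (truncIdeal n) (Polynomial.X ^ k) := by
    intro l hl
    rw [psiT, psiT, Algebra.TensorProduct.tmul_mul_tmul, ← map_mul, ← pow_add,
      Nat.sub_add_cancel (Finset.mem_range_succ_iff.mp hl)]
  rw [PsiE, Finset.sum_congr rfl summand_eq, Finset.sum_const, Finset.card_range,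
    ← Nat.cast_smul_eq_nsmul ℂ, smul_smul, Nat.cast_add_one,
    inv_mul_cancel₀ (Nat.cast_add_one_ne_zero k), one_smul]

/-- The elements `Ψ(E^k_{ij}) = (1/(k+1)) ∑_{l=0}^k ψ^{(k−l)}_i ψ*^{(l)}_j` of
`CL ⊗ ℂ[λ]/(λ^{n+1})` realize the polynomial Lie algebra `gl^{(n)}_∞`:
`[Ψ(E^k_{ij}), Ψ(E^s_{lm})] = δ_{jl} Ψ(E^{k+s}_{im}) − δ_{im} Ψ(E^{k+s}_{lj})` when
`k + s ≤ n`, and `[Ψ(E^k_{ij}), Ψ(E^s_{lm})] = 0` when `k + s > n`. -/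
theorem stmt16 (n : ℕ) {A : Type*} [Ring A] [Algebra ℂ A]
    (ψ ψs : ℤ → A)
    (h1 : ∀ i j : ℤ, ψ i * ψ j + ψ j * ψ i = 0)
    (h2 : ∀ i j : ℤ, ψs i * ψs j + ψs j * ψs i = 0)
    (h3 : ∀ i j : ℤ, ψ i * ψs j + ψs j * ψ i = if i = j then 1 else 0) :
    ∀ (i j l m : ℤ) (k s : ℕ), k ≤ n → s ≤ n →
      PsiE n ψ ψs i j k * PsiE n ψ ψs l m s - PsiE n ψ ψs l m s * PsiE n ψ ψs i j k =
        if k + s ≤ n then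
          (if j = l then PsiE n ψ ψs i m (k + s) else 0) -
            (if i = m then PsiE n ψ ψs l j (k + s) else 0)
        else 0 := by
  intro i j l m k s _ _
  simp only [PsiE_eq_tmul]
  rw [tmul_commutator_tmul, ← map_mul, ← pow_add, commutator_mul_mul_of_car ψ ψs h1 h2 h3]
  by_cases hks : k + s ≤ n
  · rw [if_pos hks, TensorProduct.sub_tmul, TensorProduct.ite_tmul, TensorProduct.ite_tmul]
  · rw [if_neg hks, truncIdeal_mk_X_pow_eq_zero (not_le.mp hks), TensorProduct.tmul_zero]
end
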